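/- arXiv:2009.10657 — 2 statements merged into one kernel-verified Lean document; each statement's English description precedes it below -/
import Mathlib

section
/- Let S be a nonempty set and 𝒮 a δ-ring on S. Let G assign to each A ∈ 𝒮 a Borel measure G_A on ℝ with ∫_ℝ(1∧x²)G_A(dx) < ∞, such that A ↦ G_A(B) is finitely additive on 𝒮 for every Borel set B. Then for every A ∈ 𝒮, the supremum over all finite families of pairwise disjoint rectangles A_i × B_i (A_i ∈ 𝒮, A_i ⊆ A, B_i Borel) of ∑_{i∈I} ∫_{B_i}(1∧x²)G_{A_i}(dx) equals ∫_ℝ(1∧x²)G_A(dx). -/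
open MeasureTheory Set Filter Topology

/-- A δ-ring of subsets: nonempty, closed under finite unions, set differences,
and countable intersections. -/
structure IsDeltaRing {T : Type*} (𝒜 : Set (Set T)) : Prop where
  nonempty : 𝒜.Nonempty
  union_mem : ∀ ⦃A B : Set T⦄, A ∈ 𝒜 → B ∈ 𝒜 → A ∪ B ∈ 𝒜
  diff_mem : ∀ ⦃A B : Set T⦄, A ∈ 𝒜 → B ∈ 𝒜 → A \ B ∈ 𝒜
  iInter_mem : ∀ A : ℕ → Set T, (∀ n, A n ∈ 𝒜) → (⋂ n, A n) ∈ 𝒜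

/-- A real-valued signed measure on a δ-ring `𝒜`: it vanishes on `∅` and is σ-additive
(with unconditionally convergent series, captured by `HasSum`) on every sequence of
pairwise disjoint members of `𝒜` whose union lies in `𝒜`. -/
def IsSignedMeasureOn {T : Type*} (𝒜 : Set (Set T)) (μ : Set T → ℝ) : Prop :=
  μ ∅ = 0 ∧ ∀ A : ℕ → Set T, (∀ n, A n ∈ 𝒜) → Pairwise (Function.onFun Disjoint A) →
    (⋃ n, A n) ∈ 𝒜 → HasSum (fun n => μ (A n)) (μ (⋃ n, A n))

/-- A finite (real-valued, countably additive) signed measure on the σ-algebra of a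
measurable space. -/
def IsFiniteSignedMeasure {X : Type*} [MeasurableSpace X] (μ : Set X → ℝ) : Prop :=
  μ ∅ = 0 ∧ ∀ B : ℕ → Set X, (∀ n, MeasurableSet (B n)) →
    Pairwise (Function.onFun Disjoint B) → HasSum (fun n => μ (B n)) (μ (⋃ n, B n))

/-- The set of sums `∑ i, |Q₀ (Aᵢ) (Bᵢ)|` over all finite families of pairwise disjoint
rectangles `Aᵢ × Bᵢ` with `Aᵢ ∈ 𝒜`, `Aᵢ ⊆ A`, `Bᵢ` measurable. -/
def RectSums {T X : Type*} [MeasurableSpace X] (𝒜 : Set (Set T))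
    (Q₀ : Set T → Set X → ℝ) (A : Set T) : Set ℝ :=
  { r | ∃ (n : ℕ) (As : Fin n → Set T) (Bs : Fin n → Set X),
      (∀ i, As i ∈ 𝒜 ∧ As i ⊆ A ∧ MeasurableSet (Bs i)) ∧
      (Pairwise fun i j => Disjoint (As i ×ˢ Bs i) (As j ×ˢ Bs j)) ∧
      r = ∑ i, |Q₀ (As i) (Bs i)| }

/-- A Borel set is bounded away from zero if it is disjoint from some interval
`(-r, r)`, `r > 0`. -/
def BoundedAwayFromZero (B : Set ℝ) : Prop := ∃ r > 0, ∀ x ∈ B, r ≤ |x|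

/-- A quasi-Lévy type measure, presented as its Jordan pair `(ν⁺, ν⁻)`: two mutually
singular Borel measures on `ℝ` with no mass at `0`, finite on every Borel set bounded
away from `0`, and with `∫ (1 ∧ x²) d(ν⁺ + ν⁻) < ∞`. -/
def IsQuasiLevyPair (νp νm : Measure ℝ) : Prop :=
  νp {0} = 0 ∧ νm {0} = 0 ∧ νp.MutuallySingular νm ∧
  (∀ r : ℝ, 0 < r → νp {x | r ≤ |x|} < ⊤ ∧ νm {x | r ≤ |x|} < ⊤) ∧
  ∫⁻ x, ENNReal.ofReal (min 1 (x ^ 2)) ∂(νp + νm) < ⊤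

/-- `J(A, B) = ∫_B (1 ∧ x²) F_A(dx)` for the quasi-Lévy family `F_A = F_A⁺ - F_A⁻`. -/
noncomputable def Jfun {S : Type*} (Fp Fm : Set S → Measure ℝ) (A : Set S) (B : Set ℝ) : ℝ :=
  (∫⁻ x in B, ENNReal.ofReal (min 1 (x ^ 2)) ∂(Fp A)).toReal -
  (∫⁻ x in B, ENNReal.ofReal (min 1 (x ^ 2)) ∂(Fm A)).toReal

/-! Since `A ↦ G_A` is finitely additive, so is `A ↦ (1 ∧ x²) · G_A`, and then a finite family of
disjoint rectangles inside `A × B` carries at most the mass of `A × B`: splitting the other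
rectangles along one of them, `A₀ × B₀`, leaves two disjoint families, one inside
`(A \ A₀) × B` and one inside `A₀ × (B \ B₀)`, to which induction applies. The bound is
attained by the single rectangle `A × ℝ`. -/

theorem IsDeltaRing.isSetRing {T : Type*} {𝒜 : Set (Set T)} (h𝒜 : IsDeltaRing 𝒜) :
    IsSetRing 𝒜 where
  empty_mem := by
    obtain ⟨E, hE⟩ := h𝒜.nonempty
    simpa using h𝒜.diff_mem hE hE
  union_mem := h𝒜.union_mem
  sdiff_mem := h𝒜.diff_mem

namespace MeasureTheory.IsSetRing

variable {S X ι : Type*} [MeasurableSpace X] {𝒮 : Set (Set S)} {ν : Set S → Measure X}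

theorem apply_le_sdiff_add_inter (h𝒮 : IsSetRing 𝒮)
    (hν : ∀ A₁ ∈ 𝒮, ∀ A₂ ∈ 𝒮, Disjoint A₁ A₂ → ν (A₁ ∪ A₂) = ν A₁ + ν A₂)
    {A A' : Set S} (hA : A ∈ 𝒮) (hA' : A' ∈ 𝒮) {B B' : Set X}
    (hdisj : Disjoint (A ×ˢ B) (A' ×ˢ B')) :
    ν A B ≤ ν (A \ A') B + ν (A ∩ A') (B \ B') := by
  rcases Set.disjoint_prod.mp hdisj with hAA' | hBB'
  · rw [hAA'.sdiff_eq_left]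
    exact le_self_add
  · rw [hBB'.sdiff_eq_left, ← Measure.add_apply,
      ← hν _ (h𝒮.sdiff_mem hA hA') _ (h𝒮.inter_mem hA hA') disjoint_sdiff_inter,
      sdiff_union_inter]

theorem sum_apply_le_of_pairwiseDisjoint_prod (h𝒮 : IsSetRing 𝒮)
    (hν : ∀ A₁ ∈ 𝒮, ∀ A₂ ∈ 𝒮, Disjoint A₁ A₂ → ν (A₁ ∪ A₂) = ν A₁ + ν A₂)
    (s : Finset ι) {As : ι → Set S} {Bs : ι → Set X}
    (hdisj : (s : Set ι).PairwiseDisjoint fun i => As i ×ˢ Bs i)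
    (hAs : ∀ i ∈ s, As i ∈ 𝒮) (hBs : ∀ i ∈ s, MeasurableSet (Bs i))
    {A : Set S} (hA : A ∈ 𝒮) {B : Set X} (hAsA : ∀ i ∈ s, As i ⊆ A)
    (hBsB : ∀ i ∈ s, Bs i ⊆ B) :
    ∑ i ∈ s, ν (As i) (Bs i) ≤ ν A B := by
  classical
  induction s using Finset.induction_on generalizing As Bs A B with
  | empty => simp
  | @insert a s has ih =>
    simp only [Finset.mem_insert, forall_eq_or_imp] at hAs hBs hAsA hBsB
    rw [Finset.coe_insert] at hdisj
    have hdisj_s := hdisj.subset (subset_insert a s)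
    have hdisj_a : ∀ i ∈ s, Disjoint (As i ×ˢ Bs i) (As a ×ˢ Bs a) := fun i hi =>
      hdisj (mem_insert_of_mem a hi) (mem_insert a s) fun h => has (h ▸ hi)
    have houter : ∑ i ∈ s, ν (As i \ As a) (Bs i) ≤ ν (A \ As a) B :=
      ih (hdisj_s.mono fun i => prod_mono sdiff_subset subset_rfl)
        (fun i hi => h𝒮.sdiff_mem (hAs.2 i hi) hAs.1) hBs.2 (h𝒮.sdiff_mem hA hAs.1)
        (fun i hi => sdiff_subset_sdiff_left (hAsA.2 i hi)) hBsB.2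
    have hinner : ∑ i ∈ s, ν (As i ∩ As a) (Bs i \ Bs a) ≤ ν (As a) (B \ Bs a) :=
      ih (hdisj_s.mono fun i => prod_mono inter_subset_left sdiff_subset)
        (fun i hi => h𝒮.inter_mem (hAs.2 i hi) hAs.1)
        (fun i hi => (hBs.2 i hi).diff hBs.1) hAs.1
        (fun i _ => inter_subset_right) (fun i hi => sdiff_subset_sdiff_left (hBsB.2 i hi))
    calc ∑ i ∈ insert a s, ν (As i) (Bs i)
        ≤ ν (As a) (Bs a) + (∑ i ∈ s, ν (As i \ As a) (Bs i) +
            ∑ i ∈ s, ν (As i ∩ As a) (Bs i \ Bs a)) := by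
          rw [Finset.sum_insert has, ← Finset.sum_add_distrib]
          gcongr with i hi
          exact h𝒮.apply_le_sdiff_add_inter hν (hAs.2 i hi) hAs.1 (hdisj_a i hi)
      _ ≤ ν (As a) (Bs a) + (ν (A \ As a) B + ν (As a) (B \ Bs a)) := by gcongr
      _ = ν A B := by
          have hB := measure_sdiff_add_inter (μ := ν (As a)) B hBs.1
          rw [inter_eq_right.mpr hBsB.1] at hB
          rw [add_left_comm, add_comm (ν (As a) (Bs a)), hB, ← Measure.add_apply,
            ← hν _ (h𝒮.sdiff_mem hA hAs.1) _ hAs.1 disjoint_sdiff_left,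
            sdiff_union_of_subset hAsA.1]

end MeasureTheory.IsSetRing

theorem sup_rect_sums_eq_integral_general {S : Type*}
    (𝒮 : Set (Set S)) (h𝒮 : IsDeltaRing 𝒮)
    (G : Set S → Measure ℝ)
    (hint : ∀ A ∈ 𝒮, ∫⁻ x, ENNReal.ofReal (min 1 (x ^ 2)) ∂(G A) < ⊤)
    (hGadd : ∀ B : Set ℝ, MeasurableSet B →
      ∀ A₁ ∈ 𝒮, ∀ A₂ ∈ 𝒮, Disjoint A₁ A₂ → G (A₁ ∪ A₂) B = G A₁ B + G A₂ B) :
    ∀ A ∈ 𝒮,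
      IsLUB
        { r : ℝ | ∃ (n : ℕ) (As : Fin n → Set S) (Bs : Fin n → Set ℝ),
            (∀ i, As i ∈ 𝒮 ∧ As i ⊆ A ∧ MeasurableSet (Bs i)) ∧
            (Pairwise fun i j => Disjoint (As i ×ˢ Bs i) (As j ×ˢ Bs j)) ∧
            r = ∑ i, (∫⁻ x in Bs i, ENNReal.ofReal (min 1 (x ^ 2)) ∂(G (As i))).toReal }
        (∫⁻ x, ENNReal.ofReal (min 1 (x ^ 2)) ∂(G A)).toReal := by
  intro A hA
  set f : ℝ → ENNReal := fun x => ENNReal.ofReal (min 1 (x ^ 2))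
  have hν : ∀ A₁ ∈ 𝒮, ∀ A₂ ∈ 𝒮, Disjoint A₁ A₂ →
      (G (A₁ ∪ A₂)).withDensity f = (G A₁).withDensity f + (G A₂).withDensity f :=
    fun A₁ h₁ A₂ h₂ hd => by
      rw [← withDensity_add_measure]
      congr 1
      exact Measure.ext fun B hB => hGadd B hB A₁ h₁ A₂ h₂ hd
  refine ⟨?_, fun b hb => hb ⟨1, fun _ => A, fun _ => univ,
    fun _ => ⟨hA, subset_rfl, MeasurableSet.univ⟩, Subsingleton.pairwise, by simp⟩⟩
  rintro r ⟨n, As, Bs, hABs, hdisj, rfl⟩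
  have hsum := h𝒮.isSetRing.sum_apply_le_of_pairwiseDisjoint_prod
    (ν := fun A => (G A).withDensity f) hν Finset.univ
    (hdisj.set_pairwise _) (fun i _ => (hABs i).1) (fun i _ => (hABs i).2.2) hA
    (fun i _ => (hABs i).2.1) (fun i _ => subset_univ (Bs i))
  simp only [withDensity_apply _ (hABs _).2.2, withDensity_apply _ MeasurableSet.univ,
    Measure.restrict_univ] at hsum
  rw [← ENNReal.toReal_sum fun i _ => ((setLIntegral_le_lintegral _ _).trans_lt
    (hint _ (hABs i).1)).ne]
  exact ENNReal.toReal_mono (hint A hA).ne hsum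

/-- For a finitely additive family `A ↦ G_A` of Borel measures with
`∫ (1 ∧ x²) dG_A < ∞`, the supremum of `∑ᵢ ∫_{Bᵢ} (1 ∧ x²) dG_{Aᵢ}` over finite disjoint
rectangle families inside `A × ℝ` is exactly `∫_ℝ (1 ∧ x²) dG_A`; stated as: the latter
is the least upper bound of the set of such sums. -/
theorem sup_rect_sums_eq_integral {S : Type*} [Nonempty S]
    (𝒮 : Set (Set S)) (h𝒮 : IsDeltaRing 𝒮)
    (G : Set S → Measure ℝ)
    (hint : ∀ A ∈ 𝒮, ∫⁻ x, ENNReal.ofReal (min 1 (x ^ 2)) ∂(G A) < ⊤)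
    (hGadd : ∀ B : Set ℝ, MeasurableSet B →
      ∀ A₁ ∈ 𝒮, ∀ A₂ ∈ 𝒮, Disjoint A₁ A₂ → G (A₁ ∪ A₂) B = G A₁ B + G A₂ B) :
    ∀ A ∈ 𝒮,
      IsLUB
        { r : ℝ | ∃ (n : ℕ) (As : Fin n → Set S) (Bs : Fin n → Set ℝ),
            (∀ i, As i ∈ 𝒮 ∧ As i ⊆ A ∧ MeasurableSet (Bs i)) ∧
            (Pairwise fun i j => Disjoint (As i ×ˢ Bs i) (As j ×ˢ Bs j)) ∧
            r = ∑ i, (∫⁻ x in Bs i, ENNReal.ofReal (min 1 (x ^ 2)) ∂(G (As i))).toReal }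
        (∫⁻ x, ENNReal.ofReal (min 1 (x ^ 2)) ∂(G A)).toReal :=
  sup_rect_sums_eq_integral_general 𝒮 h𝒮 G hint hGadd
end

section
/- Spectral representation of the characteristic function: in the setting of a QID random measure Λ on a δ-ring 𝒮 (with increasing cover Sₙ ↑ S) whose values Λ(A) have characteristic triplets (ν₀(A), ν₁(A), F_A) satisfying condition (★), let λ = |ν₀| + ν₁ + ν be the control measure extended to σ(𝒮), let a(s) = (dν₀/dλ)(s), σ²(s) = (dν₁/dλ)(s) (Radon–Nikodym derivatives), and let ρ = ρ⁺ − ρ⁻ be the measurable family of quasi-Lévy type measures disintegrating F with respect to λ. Define K(θ,s) = iθa(s) − (θ²/2)σ²(s) + ∫_ℝ(e^{iθx} − 1 − iθτ(x))ρ(s,dx). Then for every A ∈ 𝒮 and θ ∈ ℝ, E[e^{iθΛ(A)}] = exp( ∫_A K(θ,s) λ(ds) ). Moreover, |a(s)| + σ²(s) + (dν/dλ)(s) = 1 for λ-almost every s ∈ S. -/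
/-!
On a set `C ∈ 𝒮` on which the densities are bounded, the total variation of `ν₀` is
`∫_C |a| dλ`, the supremum being attained at the partition of `C` by the sign of `a`; hence
`λ(C) = ∫_C (|a| + σ² + dν/dλ) dλ`, so the density is `1` a.e. on `C`, and such sets exhaust
`S`. Since `σ²` and `dν/dλ` are a.e. nonnegative, `a` and `σ²` are then bounded, so `K(θ, ·)` is
`λ`-integrable on every `A ∈ 𝒮` and can be integrated term by term. For the jump part the
integrand `e^{iθx} - 1 - iθτ(x)` is dominated by `(2θ² + 2 + |θ|)(1 ∧ x²)`, and the
disintegration identity, given for real integrands, applies to its real and imaginary parts.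
-/

open MeasureTheory Set Filter Topology

/-- The centering function `τ(x) = x` for `|x| ≤ 1`, `τ(x) = x/|x|` for `|x| > 1`. -/
noncomputable def tauC (x : ℝ) : ℝ := if |x| ≤ 1 then x else x / |x|

/-- The integrand `e^{iθx} - 1 - iθτ(x)` of the Lévy–Khintchine formula. -/
noncomputable def levyIntegrand (θ x : ℝ) : ℂ :=
  Complex.exp (Complex.I * (θ * x)) - 1 - Complex.I * (θ * tauC x)

/-- The Lévy–Khintchine exponent `iθa - θ²b/2 + ∫ (e^{iθx} - 1 - iθτ(x)) dν` of the
characteristic triplet `(a, b, ν⁺ - ν⁻)`. -/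
noncomputable def cfExponent (a b : ℝ) (νp νm : Measure ℝ) (θ : ℝ) : ℂ :=
  Complex.I * (θ * a) - (θ ^ 2 / 2) * b +
    ((∫ x, levyIntegrand θ x ∂νp) - ∫ x, levyIntegrand θ x ∂νm)

/-- The set of total-variation sums of a set function `μ` over countable partitions of
`A` into members of the δ-ring `𝒮`. -/
def TVSums {S : Type*} (𝒮 : Set (Set S)) (μ : Set S → ℝ) (A : Set S) : Set ℝ :=
  { r | ∃ Pn : ℕ → Set S, (∀ n, Pn n ∈ 𝒮) ∧ Pairwise (Function.onFun Disjoint Pn) ∧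
      (⋃ n, Pn n) = A ∧ HasSum (fun n => |μ (Pn n)|) r }

/-- The spectral exponent `K(u,s) = iua(s) - u²σ²(s)/2 + ∫ (e^{iux} - 1 - iuτ(x)) ρ(s,dx)`. -/
noncomputable def Kexp {S : Type*} (a σsq : S → ℝ) (ρp ρm : S → Measure ℝ)
    (u : ℝ) (s : S) : ℂ :=
  Complex.I * (u * a s) - (u ^ 2 / 2) * σsq s +
    ((∫ x, levyIntegrand u x ∂(ρp s)) - ∫ x, levyIntegrand u x ∂(ρm s))

open scoped ENNReal

namespace IsDeltaRing

variable {S : Type*} {𝒮 : Set (Set S)}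

theorem empty_mem (h : IsDeltaRing 𝒮) : ∅ ∈ 𝒮 := by
  obtain ⟨A, hA⟩ := h.nonempty
  simpa using h.diff_mem hA hA

theorem inter_mem (h : IsDeltaRing 𝒮) {A B : Set S} (hA : A ∈ 𝒮) (hB : B ∈ 𝒮) :
    A ∩ B ∈ 𝒮 := by
  rw [← sdiff_sdiff_right_self]
  exact h.diff_mem hA (h.diff_mem hA hB)

theorem iUnion_mem_of_subset (h : IsDeltaRing 𝒮) {A : Set S} {B : ℕ → Set S}
    (hA : A ∈ 𝒮) (hB : ∀ n, B n ∈ 𝒮) (hBA : ∀ n, B n ⊆ A) : ⋃ n, B n ∈ 𝒮 := by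
  have hU : ⋃ n, B n = A \ ⋂ n, A \ B n := by
    simp_rw [sdiff_iInter, sdiff_sdiff_right_self, inter_eq_right.2 (hBA _)]
  rw [hU]
  exact h.diff_mem hA (h.iInter_mem _ fun n => h.diff_mem hA (hB n))

variable [mS : MeasurableSpace S]

theorem measurableSet_of_mem (hmS : mS = MeasurableSpace.generateFrom 𝒮) {A : Set S}
    (hA : A ∈ 𝒮) : MeasurableSet A :=
  hmS ▸ MeasurableSpace.measurableSet_generateFrom hA

theorem inter_mem_of_measurableSet (h : IsDeltaRing 𝒮)
    (hmS : mS = MeasurableSpace.generateFrom 𝒮) {A B : Set S} (hB : MeasurableSet B)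
    (hA : A ∈ 𝒮) : B ∩ A ∈ 𝒮 := by
  rw [hmS] at hB
  induction B, hB using MeasurableSpace.generateFrom_induction with
  | hC C hC _ => exact h.inter_mem hC hA
  | empty => simpa using h.empty_mem
  | compl C _ hC =>
    rw [← sdiff_eq_compl_inter, ← sdiff_inter_self_eq_sdiff]
    exact h.diff_mem hA hC
  | iUnion C _ hC =>
    rw [iUnion_inter]
    exact h.iUnion_mem_of_subset hA hC fun _ => inter_subset_right

theorem ae_of_forall_ae_restrict_of_abs_le (h : IsDeltaRing 𝒮)
    (hmS : mS = MeasurableSpace.generateFrom 𝒮) {Sseq : ℕ → Set S} (hSmem : ∀ n, Sseq n ∈ 𝒮)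
    (hScover : ⋃ n, Sseq n = univ) {μ : Measure S} {g : S → ℝ} (hg : Measurable g)
    {p : S → Prop} (hp : ∀ A ∈ 𝒮, ∀ c : ℝ, (∀ s ∈ A, |g s| ≤ c) → ∀ᵐ s ∂μ.restrict A, p s) :
    ∀ᵐ s ∂μ, p s := by
  let E : ℕ × ℕ → Set S := fun mn => {s | |g s| ≤ mn.2} ∩ Sseq mn.1
  have hE : ⋃ mn, E mn = univ := by
    refine eq_univ_of_forall fun s => ?_
    obtain ⟨m, hm⟩ := mem_iUnion.1 (hScover ▸ mem_univ s : s ∈ ⋃ n, Sseq n)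
    obtain ⟨n, hn⟩ := exists_nat_ge |g s|
    exact mem_iUnion.2 ⟨(m, n), hn, hm⟩
  rw [← Measure.restrict_univ (μ := μ), ← hE, ae_restrict_iUnion_iff]
  exact fun mn => hp _ (h.inter_mem_of_measurableSet hmS
    (measurableSet_le hg.abs measurable_const) (hSmem mn.1)) mn.2 fun s hs => hs.1

end IsDeltaRing

section ControlMeasure

variable {S : Type*} [mS : MeasurableSpace S] {𝒮 : Set (Set S)}

theorem sSup_TVSums_eq_setIntegral_abs (h𝒮 : IsDeltaRing 𝒮)
    (hmS : mS = MeasurableSpace.generateFrom 𝒮) {μ : Measure S} {ν₀ : Set S → ℝ}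
    {a : S → ℝ} (ha : Measurable a) (haRN : ∀ C ∈ 𝒮, ν₀ C = ∫ s in C, a s ∂μ) {E : Set S}
    (hE : E ∈ 𝒮) (haE : IntegrableOn a E μ) :
    sSup (TVSums 𝒮 ν₀ E) = ∫ s in E, |a s| ∂μ := by
  have hsum : ∀ P : ℕ → Set S, (∀ n, P n ∈ 𝒮) → Pairwise (Function.onFun Disjoint P) →
      ⋃ n, P n = E → HasSum (fun n => ∫ s in P n, |a s| ∂μ) (∫ s in E, |a s| ∂μ) := by
    rintro P hP hdisj rfl
    exact hasSum_integral_iUnion (fun n => IsDeltaRing.measurableSet_of_mem hmS (hP n))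
      hdisj haE.abs
  refine IsGreatest.csSup_eq ⟨?_, ?_⟩
  · -- the supremum is attained at the partition by the sign of `a`
    let sign : S → ℕ := fun s => if 0 ≤ a s then 0 else 1
    let P : ℕ → Set S := fun n => sign ⁻¹' {n} ∩ E
    have hsign : Measurable sign :=
      Measurable.ite (measurableSet_le measurable_const ha) measurable_const measurable_const
    have hP : ∀ n, P n ∈ 𝒮 := fun n =>
      h𝒮.inter_mem_of_measurableSet hmS (hsign (measurableSet_singleton n)) hE
    have hdisj : Pairwise (Function.onFun Disjoint P) := fun i j hij =>
      ((disjoint_singleton.2 hij).preimage sign).mono inter_subset_left inter_subset_left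
    have hU : ⋃ n, P n = E := by ext s; simp [P]
    have habs : ∀ n, |ν₀ (P n)| = ∫ s in P n, |a s| ∂μ := by
      intro n
      have hPm := IsDeltaRing.measurableSet_of_mem hmS (hP n)
      rw [haRN _ (hP n)]
      by_cases hn : n = 0
      · have hpos : ∀ s ∈ P n, 0 ≤ a s := fun s hs => by
          by_contra h; simp [P, sign, h, hn] at hs
        rw [setIntegral_congr_fun hPm fun s hs => abs_of_nonneg (hpos s hs),
          abs_of_nonneg (setIntegral_nonneg hPm hpos)]
      · have hneg : ∀ s ∈ P n, a s < 0 := fun s hs => by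
          by_contra h; simp_all [P, sign]
        rw [setIntegral_congr_fun hPm fun s hs => abs_of_neg (hneg s hs), integral_neg,
          abs_of_nonpos (setIntegral_nonpos hPm fun s hs => (hneg s hs).le)]
    exact ⟨P, hP, hdisj, hU, by simpa only [habs] using hsum P hP hdisj hU⟩
  · rintro r ⟨P, hP, hdisj, hU, hr⟩
    refine hasSum_le (fun n => ?_) hr (hsum P hP hdisj hU)
    rw [haRN _ (hP n)]
    exact abs_integral_le_integral_abs

theorem measureReal_eq_setIntegral_density (h𝒮 : IsDeltaRing 𝒮)
    (hmS : mS = MeasurableSpace.generateFrom 𝒮) {lam : Measure S} {ν₀ ν₁ ν : Set S → ℝ}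
    (hlam : ∀ A ∈ 𝒮, lam A = ENNReal.ofReal (sSup (TVSums 𝒮 ν₀ A) + ν₁ A + ν A))
    (hν₁pos : ∀ A ∈ 𝒮, 0 ≤ ν₁ A) (hνpos : ∀ A ∈ 𝒮, 0 ≤ ν A) {a σsq dν : S → ℝ}
    (ha : Measurable a) (haRN : ∀ A ∈ 𝒮, ν₀ A = ∫ s in A, a s ∂lam)
    (hσRN : ∀ A ∈ 𝒮, ν₁ A = ∫ s in A, σsq s ∂lam)
    (hdνRN : ∀ A ∈ 𝒮, ν A = ∫ s in A, dν s ∂lam) {C : Set S} (hC : C ∈ 𝒮)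
    (haC : IntegrableOn a C lam) (hσC : IntegrableOn σsq C lam)
    (hdνC : IntegrableOn dν C lam) :
    lam.real C = ∫ s in C, (|a s| + σsq s + dν s) ∂lam := by
  have hTV := sSup_TVSums_eq_setIntegral_abs h𝒮 hmS ha haRN hC haC
  have hnonneg : 0 ≤ sSup (TVSums 𝒮 ν₀ C) + ν₁ C + ν C := by
    have := setIntegral_nonneg (μ := lam) (IsDeltaRing.measurableSet_of_mem hmS hC)
      fun s _ => abs_nonneg (a s)
    linarith [hν₁pos C hC, hνpos C hC]
  rw [measureReal_def, hlam C hC, ENNReal.toReal_ofReal hnonneg, hTV, hσRN C hC, hdνRN C hC,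
    integral_add (f := fun s => |a s| + σsq s) (haC.abs.add hσC) hdνC,
    integral_add haC.abs hσC]

theorem ae_restrict_density_eq_one (h𝒮 : IsDeltaRing 𝒮)
    (hmS : mS = MeasurableSpace.generateFrom 𝒮) {lam : Measure S} {ν₀ ν₁ ν : Set S → ℝ}
    (hlam : ∀ A ∈ 𝒮, lam A = ENNReal.ofReal (sSup (TVSums 𝒮 ν₀ A) + ν₁ A + ν A))
    (hν₁pos : ∀ A ∈ 𝒮, 0 ≤ ν₁ A) (hνpos : ∀ A ∈ 𝒮, 0 ≤ ν A) {a σsq dν : S → ℝ}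
    (ha : Measurable a) (haRN : ∀ A ∈ 𝒮, ν₀ A = ∫ s in A, a s ∂lam)
    (hσRN : ∀ A ∈ 𝒮, ν₁ A = ∫ s in A, σsq s ∂lam)
    (hdνRN : ∀ A ∈ 𝒮, ν A = ∫ s in A, dν s ∂lam) {A : Set S} (hA : A ∈ 𝒮)
    (haA : IntegrableOn a A lam) (hσA : IntegrableOn σsq A lam)
    (hdνA : IntegrableOn dν A lam) :
    ∀ᵐ s ∂lam.restrict A, |a s| + σsq s + dν s = 1 ∧ 0 ≤ σsq s ∧ 0 ≤ dν s := by
  have hmem : ∀ t, MeasurableSet t → t ∩ A ∈ 𝒮 := fun t ht =>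
    h𝒮.inter_mem_of_measurableSet hmS ht hA
  have hfin : IsFiniteMeasure (lam.restrict A) :=
    isFiniteMeasure_restrict.2 (by rw [hlam A hA]; exact ENNReal.ofReal_ne_top)
  have hone : (fun s => |a s| + σsq s + dν s) =ᵐ[lam.restrict A] fun _ => 1 := by
    refine Integrable.ae_eq_of_forall_setIntegral_eq _ _ ((haA.abs.add hσA).add hdνA)
      (integrable_const 1) fun t ht _ => ?_
    rw [Measure.restrict_restrict ht, ← measureReal_eq_setIntegral_density h𝒮 hmS hlam hν₁pos
      hνpos ha haRN hσRN hdνRN (hmem t ht) (haA.mono_set inter_subset_right)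
      (hσA.mono_set inter_subset_right) (hdνA.mono_set inter_subset_right),
      setIntegral_const, smul_eq_mul, mul_one]
  have hσ : 0 ≤ᵐ[lam.restrict A] σsq :=
    ae_nonneg_restrict_of_forall_setIntegral_nonneg_inter hσA fun t ht _ =>
      hσRN _ (hmem t ht) ▸ hν₁pos _ (hmem t ht)
  have hdν : 0 ≤ᵐ[lam.restrict A] dν :=
    ae_nonneg_restrict_of_forall_setIntegral_nonneg_inter hdνA fun t ht _ =>
      hdνRN _ (hmem t ht) ▸ hνpos _ (hmem t ht)
  filter_upwards [hone, hσ, hdν] with s h1 h2 h3 using ⟨h1, h2, h3⟩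

theorem ae_density_eq_one (h𝒮 : IsDeltaRing 𝒮) (hmS : mS = MeasurableSpace.generateFrom 𝒮)
    {Sseq : ℕ → Set S} (hSmem : ∀ n, Sseq n ∈ 𝒮) (hScover : ⋃ n, Sseq n = univ)
    {lam : Measure S} {ν₀ ν₁ ν : Set S → ℝ}
    (hlam : ∀ A ∈ 𝒮, lam A = ENNReal.ofReal (sSup (TVSums 𝒮 ν₀ A) + ν₁ A + ν A))
    (hν₁pos : ∀ A ∈ 𝒮, 0 ≤ ν₁ A) (hνpos : ∀ A ∈ 𝒮, 0 ≤ ν A) {a σsq dν : S → ℝ}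
    (ha : Measurable a) (hσ : Measurable σsq) (hdν : Measurable dν)
    (haRN : ∀ A ∈ 𝒮, ν₀ A = ∫ s in A, a s ∂lam)
    (hσRN : ∀ A ∈ 𝒮, ν₁ A = ∫ s in A, σsq s ∂lam)
    (hdνRN : ∀ A ∈ 𝒮, ν A = ∫ s in A, dν s ∂lam) :
    ∀ᵐ s ∂lam, |a s| + σsq s + dν s = 1 ∧ 0 ≤ σsq s ∧ 0 ≤ dν s := by
  refine h𝒮.ae_of_forall_ae_restrict_of_abs_le hmS hSmem hScover
    ((ha.abs.add hσ.abs).add hdν.abs) fun A hA c hc => ?_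
  have hint : ∀ g : S → ℝ, Measurable g → (∀ s, |g s| ≤ |a s| + |σsq s| + |dν s|) →
      IntegrableOn g A lam := fun g hg hgle =>
    Measure.integrableOn_of_bounded (by rw [hlam A hA]; exact ENNReal.ofReal_ne_top)
      hg.aestronglyMeasurable (M := c) <|
      ae_restrict_of_forall_mem (IsDeltaRing.measurableSet_of_mem hmS hA) fun s hs =>
        (hgle s).trans ((le_abs_self _).trans (hc s hs))
  exact ae_restrict_density_eq_one h𝒮 hmS hlam hν₁pos hνpos ha haRN hσRN hdνRN hA
    (hint a ha fun s => by linarith [abs_nonneg (σsq s), abs_nonneg (dν s)])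
    (hint σsq hσ fun s => by linarith [abs_nonneg (a s), abs_nonneg (dν s)])
    (hint dν hdν fun s => by linarith [abs_nonneg (a s), abs_nonneg (σsq s)])

end ControlMeasure

section LevyIntegrand

theorem measurable_tauC : Measurable tauC :=
  Measurable.ite (measurableSet_le measurable_id.abs measurable_const) measurable_id
    (measurable_id.div measurable_id.abs)

theorem measurable_levyIntegrand (θ : ℝ) : Measurable (levyIntegrand θ) := by
  have := measurable_tauC
  unfold levyIntegrand
  fun_prop

theorem norm_exp_I_mul_sub_one_sub_le (y : ℝ) :
    ‖Complex.exp (Complex.I * y) - 1 - Complex.I * y‖ ≤ 2 * y ^ 2 := by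
  have hIy : ‖Complex.I * y‖ = |y| := by simp
  rcases le_or_gt |y| 1 with hy | hy
  · calc _ ≤ ‖Complex.I * y‖ ^ 2 := Complex.norm_exp_sub_one_sub_id_le (hIy ▸ hy)
      _ ≤ 2 * y ^ 2 := by rw [hIy, sq_abs]; nlinarith [sq_nonneg y]
  · calc _ ≤ ‖Complex.exp (Complex.I * y) - 1‖ + ‖Complex.I * y‖ := norm_sub_le _ _
      _ ≤ |y| + |y| := by
        rw [hIy]
        gcongr
        simpa using Real.norm_exp_I_mul_ofReal_sub_one_le (x := y)
      _ ≤ 2 * y ^ 2 := by nlinarith [sq_abs y]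

theorem norm_levyIntegrand_le (θ x : ℝ) :
    ‖levyIntegrand θ x‖ ≤ (2 * θ ^ 2 + 2 + |θ|) * min 1 (x ^ 2) := by
  unfold levyIntegrand tauC
  split_ifs with hx
  · rw [min_eq_right (by nlinarith [sq_abs x, abs_nonneg x] : x ^ 2 ≤ 1)]
    calc _ ≤ 2 * (θ * x) ^ 2 := by exact_mod_cast norm_exp_I_mul_sub_one_sub_le (θ * x)
      _ ≤ _ := by nlinarith [sq_nonneg x, abs_nonneg θ]
  · rw [min_eq_left (by nlinarith [sq_abs x] : 1 ≤ x ^ 2), mul_one]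
    have hexp : ‖Complex.exp (Complex.I * (θ * x))‖ = 1 := by
      exact_mod_cast Complex.norm_exp_I_mul_ofReal (θ * x)
    have hτ : ‖Complex.I * (θ * (x / |x| : ℝ))‖ = |θ| := by
      have : x ≠ 0 := by rintro rfl; simp at hx
      simp [this]
    calc _ ≤ ‖Complex.exp (Complex.I * (θ * x))‖ + ‖(1 : ℂ)‖ + ‖Complex.I * (θ * (x / |x| : ℝ))‖ :=
          (norm_sub_le _ _).trans (add_le_add_left (norm_sub_le _ _) _)
      _ ≤ _ := by rw [hexp, hτ, norm_one]; nlinarith [sq_nonneg θ]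

end LevyIntegrand

section QuasiLevyIntegrals

variable {E : Type*} [NormedAddCommGroup E]

theorem lintegral_ofReal_norm_le_of_norm_le (μ : Measure ℝ) {g : ℝ → E} {c : ℝ} (hc : 0 ≤ c)
    (hg : ∀ x, ‖g x‖ ≤ c * min 1 (x ^ 2)) :
    ∫⁻ x, ENNReal.ofReal ‖g x‖ ∂μ ≤
      ENNReal.ofReal c * ∫⁻ x, ENNReal.ofReal (min 1 (x ^ 2)) ∂μ := by
  rw [← lintegral_const_mul' _ _ ENNReal.ofReal_ne_top]
  exact lintegral_mono fun x => by
    rw [← ENNReal.ofReal_mul hc]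
    exact ENNReal.ofReal_le_ofReal (hg x)

theorem integrable_of_norm_le_mul_min_one_sq {μ : Measure ℝ}
    (hμ : ∫⁻ x, ENNReal.ofReal (min 1 (x ^ 2)) ∂μ < ∞) {g : ℝ → E}
    (hgm : AEStronglyMeasurable g μ) {c : ℝ} (hc : 0 ≤ c)
    (hg : ∀ x, ‖g x‖ ≤ c * min 1 (x ^ 2)) : Integrable g μ :=
  ⟨hgm, hasFiniteIntegral_iff_norm g |>.2 <|
    (lintegral_ofReal_norm_le_of_norm_le μ hc hg).trans_lt
      (ENNReal.mul_lt_top ENNReal.ofReal_lt_top hμ)⟩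

theorem norm_integral_le_of_norm_le_mul_min_one_sq [NormedSpace ℝ E] {μ : Measure ℝ}
    (hμ : ∫⁻ x, ENNReal.ofReal (min 1 (x ^ 2)) ∂μ ≤ 1) {g : ℝ → E} {c : ℝ} (hc : 0 ≤ c)
    (hg : ∀ x, ‖g x‖ ≤ c * min 1 (x ^ 2)) : ‖∫ x, g x ∂μ‖ ≤ c :=
  (norm_integral_le_lintegral_norm g).trans <| ENNReal.toReal_le_of_le_ofReal hc <|
    (lintegral_ofReal_norm_le_of_norm_le μ hc hg).trans (mul_le_of_le_one_right' hμ)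

end QuasiLevyIntegrals

theorem measurable_integral_of_forall_integrable {S : Type*} [MeasurableSpace S]
    {ρ : S → Measure ℝ} (hρ : Measurable ρ) {g : ℝ → ℂ} (hg : Measurable g)
    (hint : ∀ s, Integrable g (ρ s)) : Measurable fun s => ∫ x, g x ∂ρ s := by
  have hreal : ∀ f : ℝ → ℝ, Measurable f → (∀ s, Integrable f (ρ s)) →
      Measurable fun s => ∫ x, f x ∂ρ s := by
    intro f hf hfint
    simp_rw [integral_eq_lintegral_pos_part_sub_lintegral_neg_part (hfint _)]
    exact ((Measure.measurable_lintegral hf.ennreal_ofReal).comp hρ).ennreal_toReal.sub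
      ((Measure.measurable_lintegral hf.neg.ennreal_ofReal).comp hρ).ennreal_toReal
  refine measurable_of_re_im ?_ ?_
  · simp_rw [← integral_re (hint _)]
    exact hreal _ (RCLike.continuous_re.measurable.comp hg) fun s => (hint s).re
  · simp_rw [← integral_im (hint _)]
    exact hreal _ (RCLike.continuous_im.measurable.comp hg) fun s => (hint s).im

section Disintegration

variable {S : Type*} [MeasurableSpace S] {μ : Measure S} {A : Set S}
  {ρp ρm : S → Measure ℝ} {νp νm : Measure ℝ}

theorem integrableOn_sub_integral_of_norm_le_mul_min_one_sq (hA : μ A < ∞)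
    (hρp : Measurable ρp) (hρm : Measurable ρm)
    (hρbdd : ∀ s, (∫⁻ x, ENNReal.ofReal (min 1 (x ^ 2)) ∂(ρp s)) ≤ 1 ∧
      (∫⁻ x, ENNReal.ofReal (min 1 (x ^ 2)) ∂(ρm s)) ≤ 1)
    {h : ℝ → ℂ} (hh : Measurable h) {c : ℝ} (hc : 0 ≤ c)
    (hhc : ∀ x, ‖h x‖ ≤ c * min 1 (x ^ 2)) :
    IntegrableOn (fun s => (∫ x, h x ∂(ρp s)) - ∫ x, h x ∂(ρm s)) A μ := by
  have hint : ∀ ν : Measure ℝ, ∫⁻ x, ENNReal.ofReal (min 1 (x ^ 2)) ∂ν ≤ 1 →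
      Integrable h ν := fun ν hν =>
    integrable_of_norm_le_mul_min_one_sq (hν.trans_lt ENNReal.one_lt_top)
      hh.aestronglyMeasurable hc hhc
  have hmeas := (measurable_integral_of_forall_integrable hρp hh fun s => hint _ (hρbdd s).1).sub
    (measurable_integral_of_forall_integrable hρm hh fun s => hint _ (hρbdd s).2)
  refine Measure.integrableOn_of_bounded hA.ne hmeas.aestronglyMeasurable (M := c + c)
    (ae_of_all _ fun s => (norm_sub_le _ _).trans (add_le_add ?_ ?_))
  exacts [norm_integral_le_of_norm_le_mul_min_one_sq (hρbdd s).1 hc hhc,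
    norm_integral_le_of_norm_le_mul_min_one_sq (hρbdd s).2 hc hhc]

theorem sub_integral_eq_setIntegral_of_disintegration (hA : μ A < ∞) (hρp : Measurable ρp)
    (hρm : Measurable ρm)
    (hρbdd : ∀ s, (∫⁻ x, ENNReal.ofReal (min 1 (x ^ 2)) ∂(ρp s)) ≤ 1 ∧
      (∫⁻ x, ENNReal.ofReal (min 1 (x ^ 2)) ∂(ρm s)) ≤ 1)
    (hν : ∫⁻ x, ENNReal.ofReal (min 1 (x ^ 2)) ∂(νp + νm) < ∞)
    (hdis : ∀ g : ℝ → ℝ, Measurable g →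
      (∫⁻ s in A, (∫⁻ x, ENNReal.ofReal |g x| ∂(ρp s + ρm s)) ∂μ) < ⊤ →
      (∫ x, g x ∂νp) - (∫ x, g x ∂νm) = ∫ s in A, ((∫ x, g x ∂(ρp s)) - ∫ x, g x ∂(ρm s)) ∂μ)
    {h : ℝ → ℂ} (hh : Measurable h) {c : ℝ} (hc : 0 ≤ c)
    (hhc : ∀ x, ‖h x‖ ≤ c * min 1 (x ^ 2)) :
    (∫ x, h x ∂νp) - (∫ x, h x ∂νm) =
      ∫ s in A, ((∫ x, h x ∂(ρp s)) - ∫ x, h x ∂(ρm s)) ∂μ := by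
  rw [lintegral_add_measure] at hν
  have hint : ∀ ν : Measure ℝ, ∫⁻ x, ENNReal.ofReal (min 1 (x ^ 2)) ∂ν < ∞ →
      Integrable h ν := fun ν hν =>
    integrable_of_norm_le_mul_min_one_sq hν hh.aestronglyMeasurable hc hhc
  have hρp_int : ∀ s, Integrable h (ρp s) := fun s =>
    hint _ ((hρbdd s).1.trans_lt ENNReal.one_lt_top)
  have hρm_int : ∀ s, Integrable h (ρm s) := fun s =>
    hint _ ((hρbdd s).2.trans_lt ENNReal.one_lt_top)
  have hk := integrableOn_sub_integral_of_norm_le_mul_min_one_sq hA hρp hρm hρbdd hh hc hhc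
  have hL : ∀ L : ℂ →L[ℝ] ℝ,
      L ((∫ x, h x ∂νp) - (∫ x, h x ∂νm)) =
        L (∫ s in A, ((∫ x, h x ∂(ρp s)) - ∫ x, h x ∂(ρm s)) ∂μ) := by
    intro L
    have hLc : 0 ≤ ‖L‖ * c := mul_nonneg (norm_nonneg L) hc
    have hLh : ∀ x, ‖L (h x)‖ ≤ ‖L‖ * c * min 1 (x ^ 2) := fun x => by
      rw [mul_assoc]
      exact (L.le_opNorm _).trans (by gcongr; exact hhc x)
    have hfin : (∫⁻ s in A, (∫⁻ x, ENNReal.ofReal |L (h x)| ∂(ρp s + ρm s)) ∂μ) < ⊤ := by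
      have hper : ∀ s, ∫⁻ x, ENNReal.ofReal |L (h x)| ∂(ρp s + ρm s) ≤
          ENNReal.ofReal (‖L‖ * c) * 2 := fun s => by
        rw [lintegral_add_measure, mul_two]
        exact add_le_add
          ((lintegral_ofReal_norm_le_of_norm_le _ hLc hLh).trans
            (mul_le_of_le_one_right' (hρbdd s).1))
          ((lintegral_ofReal_norm_le_of_norm_le _ hLc hLh).trans
            (mul_le_of_le_one_right' (hρbdd s).2))
      refine (lintegral_mono hper).trans_lt ?_
      rw [setLIntegral_const]
      exact ENNReal.mul_lt_top (by finiteness) hA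
    rw [map_sub, ← L.integral_comp_comm (hint νp (lt_of_le_of_lt le_self_add hν)),
      ← L.integral_comp_comm (hint νm (lt_of_le_of_lt le_add_self hν)),
      hdis (fun x => L (h x)) (L.measurable.comp hh) hfin, ← L.integral_comp_comm hk]
    refine integral_congr_ae (ae_of_all _ fun s => ?_)
    simp only [map_sub, L.integral_comp_comm (hρp_int s), L.integral_comp_comm (hρm_int s)]
  exact Complex.ext (hL Complex.reCLM) (hL Complex.imCLM)

theorem setIntegral_Kexp (hA : μ A < ∞) {a σsq : S → ℝ} (ha : IntegrableOn a A μ)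
    (hσ : IntegrableOn σsq A μ) (hρp : Measurable ρp) (hρm : Measurable ρm)
    (hρbdd : ∀ s, (∫⁻ x, ENNReal.ofReal (min 1 (x ^ 2)) ∂(ρp s)) ≤ 1 ∧
      (∫⁻ x, ENNReal.ofReal (min 1 (x ^ 2)) ∂(ρm s)) ≤ 1)
    (hν : ∫⁻ x, ENNReal.ofReal (min 1 (x ^ 2)) ∂(νp + νm) < ∞)
    (hdis : ∀ g : ℝ → ℝ, Measurable g →
      (∫⁻ s in A, (∫⁻ x, ENNReal.ofReal |g x| ∂(ρp s + ρm s)) ∂μ) < ⊤ →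
      (∫ x, g x ∂νp) - (∫ x, g x ∂νm) = ∫ s in A, ((∫ x, g x ∂(ρp s)) - ∫ x, g x ∂(ρm s)) ∂μ)
    (θ : ℝ) :
    ∫ s in A, Kexp a σsq ρp ρm θ s ∂μ =
      cfExponent (∫ s in A, a s ∂μ) (∫ s in A, σsq s ∂μ) νp νm θ := by
  have hC : 0 ≤ 2 * θ ^ 2 + 2 + |θ| := by positivity
  have hk := integrableOn_sub_integral_of_norm_le_mul_min_one_sq hA hρp hρm hρbdd
    (measurable_levyIntegrand θ) hC (norm_levyIntegrand_le θ)
  have hLevy := sub_integral_eq_setIntegral_of_disintegration hA hρp hρm hρbdd hν hdis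
    (measurable_levyIntegrand θ) hC (norm_levyIntegrand_le θ)
  calc ∫ s in A, Kexp a σsq ρp ρm θ s ∂μ
      = ∫ s in A, ((a s : ℂ) * (Complex.I * θ) - (σsq s : ℂ) * (θ ^ 2 / 2) +
          ((∫ x, levyIntegrand θ x ∂(ρp s)) - ∫ x, levyIntegrand θ x ∂(ρm s))) ∂μ := by
        congr 1 with s
        simp only [Kexp]
        ring
    _ = (∫ s in A, a s ∂μ : ℝ) * (Complex.I * θ) - (∫ s in A, σsq s ∂μ : ℝ) * (θ ^ 2 / 2) +
          ∫ s in A, ((∫ x, levyIntegrand θ x ∂(ρp s)) - ∫ x, levyIntegrand θ x ∂(ρm s)) ∂μ := by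
        rw [integral_add (f := fun s => (a s : ℂ) * (Complex.I * θ) - (σsq s : ℂ) * (θ ^ 2 / 2))
            ((ha.ofReal.mul_const _).sub (hσ.ofReal.mul_const _)) hk,
          integral_sub (f := fun s => (a s : ℂ) * (Complex.I * θ))
            (g := fun s => (σsq s : ℂ) * (θ ^ 2 / 2)) (ha.ofReal.mul_const _)
            (hσ.ofReal.mul_const _), integral_mul_const,
          integral_mul_const, integral_complex_ofReal, integral_complex_ofReal]
    _ = cfExponent (∫ s in A, a s ∂μ) (∫ s in A, σsq s ∂μ) νp νm θ := by
        rw [← hLevy, cfExponent]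
        ring

end Disintegration

theorem sSup_RectSums_nonneg {T X : Type*} [MeasurableSpace X] (𝒜 : Set (Set T))
    (Q₀ : Set T → Set X → ℝ) (A : Set T) : 0 ≤ sSup (RectSums 𝒜 Q₀ A) :=
  Real.sSup_nonneg fun _ ⟨_, _, _, _, _, hr⟩ =>
    hr ▸ Finset.sum_nonneg fun _ _ => abs_nonneg _

theorem spectral_representation_general {S Ω : Type*}
    [mS : MeasurableSpace S] [MeasurableSpace Ω]
    (𝒮 : Set (Set S)) (h𝒮 : IsDeltaRing 𝒮)
    (hmS : mS = MeasurableSpace.generateFrom 𝒮)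
    (Sseq : ℕ → Set S) (hSmem : ∀ n, Sseq n ∈ 𝒮)
    (hScover : ⋃ n, Sseq n = univ)
    (ν₀ : Set S → ℝ)
    (ν₁ : Set S → ℝ) (hν₁pos : ∀ A ∈ 𝒮, 0 ≤ ν₁ A)
    (Fp Fm : Set S → Measure ℝ)
    (hql : ∀ A ∈ 𝒮, IsQuasiLevyPair (Fp A) (Fm A))
    -- the control measure
    (lam : Measure S)
    (hlam : ∀ A ∈ 𝒮, lam A = ENNReal.ofReal
      (sSup (TVSums 𝒮 ν₀ A) + ν₁ A + sSup (RectSums 𝒮 (Jfun Fp Fm) A)))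
    -- the Radon–Nikodym derivatives of `ν₀`, `ν₁` and `ν` with respect to `λ`
    (a σsq dν : S → ℝ)
    (hameas : Measurable a) (hσmeas : Measurable σsq) (hdνmeas : Measurable dν)
    (haRN : ∀ A ∈ 𝒮, ν₀ A = ∫ s in A, a s ∂lam)
    (hσRN : ∀ A ∈ 𝒮, ν₁ A = ∫ s in A, σsq s ∂lam)
    (hdνRN : ∀ A ∈ 𝒮, sSup (RectSums 𝒮 (Jfun Fp Fm) A) = ∫ s in A, dν s ∂lam)
    -- the disintegrating kernels of `F`
    (ρp ρm : S → Measure ℝ)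
    (hρbdd : ∀ s, (∫⁻ x, ENNReal.ofReal (min 1 (x ^ 2)) ∂(ρp s)) ≤ 1 ∧
      (∫⁻ x, ENNReal.ofReal (min 1 (x ^ 2)) ∂(ρm s)) ≤ 1)
    (hρpmeas : ∀ B : Set ℝ, MeasurableSet B → Measurable fun s => ρp s B)
    (hρmmeas : ∀ B : Set ℝ, MeasurableSet B → Measurable fun s => ρm s B)
    (hdis : ∀ A ∈ 𝒮, ∀ g : ℝ → ℝ, Measurable g →
      (∫⁻ s in A, (∫⁻ x, ENNReal.ofReal |g x| ∂(ρp s + ρm s)) ∂lam) < ⊤ →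
      (∫ x, g x ∂(Fp A)) - (∫ x, g x ∂(Fm A)) =
        ∫ s in A, ((∫ x, g x ∂(ρp s)) - ∫ x, g x ∂(ρm s)) ∂lam)
    -- the QID random measure with these characteristic triplets
    (P : Measure Ω)
    (Λ : Set S → Ω → ℝ)
    (hCF : ∀ A ∈ 𝒮, ∀ θ : ℝ,
      (∫ ω, Complex.exp (Complex.I * (θ * Λ A ω)) ∂P) =
        Complex.exp (cfExponent (ν₀ A) (ν₁ A) (Fp A) (Fm A) θ)) :
    (∀ A ∈ 𝒮, ∀ θ : ℝ,
      (∫ ω, Complex.exp (Complex.I * (θ * Λ A ω)) ∂P) =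
        Complex.exp (∫ s in A, Kexp a σsq ρp ρm θ s ∂lam)) ∧
    (∀ᵐ s ∂lam, |a s| + σsq s + dν s = 1) := by
  have hdens := ae_density_eq_one h𝒮 hmS hSmem hScover hlam hν₁pos
    (ν := fun A => sSup (RectSums 𝒮 (Jfun Fp Fm) A)) (fun A _ => sSup_RectSums_nonneg _ _ _)
    hameas hσmeas hdνmeas haRN hσRN hdνRN
  refine ⟨fun A hA θ => ?_, hdens.mono fun s hs => hs.1⟩
  have hfin : lam A < ∞ := by rw [hlam A hA]; exact ENNReal.ofReal_lt_top
  have hbdd : ∀ᵐ s ∂lam.restrict A, ‖a s‖ ≤ 1 ∧ ‖σsq s‖ ≤ 1 :=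
    ae_restrict_of_ae <| hdens.mono fun s ⟨hs, hσ, hdν⟩ => by
      simp only [Real.norm_eq_abs, abs_of_nonneg hσ]
      constructor <;> linarith [abs_nonneg (a s)]
  have ha := Measure.integrableOn_of_bounded hfin.ne hameas.aestronglyMeasurable
    (hbdd.mono fun _ h => h.1)
  have hσ := Measure.integrableOn_of_bounded hfin.ne hσmeas.aestronglyMeasurable
    (hbdd.mono fun _ h => h.2)
  rw [hCF A hA θ, setIntegral_Kexp hfin ha hσ (Measure.measurable_of_measurable_coe _ hρpmeas)
    (Measure.measurable_of_measurable_coe _ hρmmeas) hρbdd (hql A hA).2.2.2.2 (hdis A hA) θ,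
    haRN A hA, hσRN A hA]

/-- Spectral representation of the characteristic function of a QID
random measure: `E[e^{iθΛ(A)}] = exp (∫_A K(θ,s) λ(ds))` for all `A ∈ 𝒮`, and
`|a(s)| + σ²(s) + (dν/dλ)(s) = 1` for λ-a.e. `s`. -/
theorem spectral_representation {S Ω : Type*} [Nonempty S]
    [mS : MeasurableSpace S] [MeasurableSpace Ω]
    (𝒮 : Set (Set S)) (h𝒮 : IsDeltaRing 𝒮)
    (hmS : mS = MeasurableSpace.generateFrom 𝒮)
    (Sseq : ℕ → Set S) (hSmem : ∀ n, Sseq n ∈ 𝒮) (hSmono : Monotone Sseq)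
    (hScover : ⋃ n, Sseq n = univ)
    (ν₀ : Set S → ℝ) (hν₀ : IsSignedMeasureOn 𝒮 ν₀)
    (ν₁ : Set S → ℝ) (hν₁pos : ∀ A ∈ 𝒮, 0 ≤ ν₁ A) (hν₁ : IsSignedMeasureOn 𝒮 ν₁)
    (Fp Fm : Set S → Measure ℝ)
    (hql : ∀ A ∈ 𝒮, IsQuasiLevyPair (Fp A) (Fm A))
    (hsigned : ∀ B : Set ℝ, MeasurableSet B → BoundedAwayFromZero B →
      IsSignedMeasureOn 𝒮 fun A => (Fp A B).toReal - (Fm A B).toReal)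
    (hstar : ∀ A ∈ 𝒮, BddAbove (RectSums 𝒮 (Jfun Fp Fm) A))
    -- the control measure
    (lam : Measure S)
    (hlam : ∀ A ∈ 𝒮, lam A = ENNReal.ofReal
      (sSup (TVSums 𝒮 ν₀ A) + ν₁ A + sSup (RectSums 𝒮 (Jfun Fp Fm) A)))
    -- the Radon–Nikodym derivatives of `ν₀`, `ν₁` and `ν` with respect to `λ`
    (a σsq dν : S → ℝ)
    (hameas : Measurable a) (hσmeas : Measurable σsq) (hdνmeas : Measurable dν)
    (haRN : ∀ A ∈ 𝒮, ν₀ A = ∫ s in A, a s ∂lam)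
    (hσRN : ∀ A ∈ 𝒮, ν₁ A = ∫ s in A, σsq s ∂lam)
    (hdνRN : ∀ A ∈ 𝒮, sSup (RectSums 𝒮 (Jfun Fp Fm) A) = ∫ s in A, dν s ∂lam)
    -- the disintegrating kernels of `F`
    (ρp ρm : S → Measure ℝ)
    (hρsing : ∀ s, (ρp s).MutuallySingular (ρm s))
    (hρ0 : ∀ s, ρp s {0} = 0 ∧ ρm s {0} = 0)
    (hρbdd : ∀ s, (∫⁻ x, ENNReal.ofReal (min 1 (x ^ 2)) ∂(ρp s)) ≤ 1 ∧
      (∫⁻ x, ENNReal.ofReal (min 1 (x ^ 2)) ∂(ρm s)) ≤ 1)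
    (hρpmeas : ∀ B : Set ℝ, MeasurableSet B → Measurable fun s => ρp s B)
    (hρmmeas : ∀ B : Set ℝ, MeasurableSet B → Measurable fun s => ρm s B)
    (hdis : ∀ A ∈ 𝒮, ∀ g : ℝ → ℝ, Measurable g →
      (∫⁻ s in A, (∫⁻ x, ENNReal.ofReal |g x| ∂(ρp s + ρm s)) ∂lam) < ⊤ →
      (∫ x, g x ∂(Fp A)) - (∫ x, g x ∂(Fm A)) =
        ∫ s in A, ((∫ x, g x ∂(ρp s)) - ∫ x, g x ∂(ρm s)) ∂lam)
    -- the QID random measure with these characteristic triplets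
    (P : Measure Ω) (hP : IsProbabilityMeasure P)
    (Λ : Set S → Ω → ℝ) (hΛmeas : ∀ A ∈ 𝒮, Measurable (Λ A))
    (hCF : ∀ A ∈ 𝒮, ∀ θ : ℝ,
      (∫ ω, Complex.exp (Complex.I * (θ * Λ A ω)) ∂P) =
        Complex.exp (cfExponent (ν₀ A) (ν₁ A) (Fp A) (Fm A) θ)) :
    (∀ A ∈ 𝒮, ∀ θ : ℝ,
      (∫ ω, Complex.exp (Complex.I * (θ * Λ A ω)) ∂P) =
        Complex.exp (∫ s in A, Kexp a σsq ρp ρm θ s ∂lam)) ∧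
    (∀ᵐ s ∂lam, |a s| + σsq s + dν s = 1) :=
  spectral_representation_general (mS := mS) 𝒮 h𝒮 hmS Sseq hSmem hScover ν₀ ν₁ hν₁pos Fp Fm hql lam
    hlam a σsq dν hameas hσmeas hdνmeas haRN hσRN hdνRN ρp ρm hρbdd hρpmeas hρmmeas hdis P Λ hCF
end
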